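/- For every integer n ≥ 1 and all real x, x · Bel'_{n,λ}(x) = x · ∑_{m=0}^{n-1} C(n,m) · Bel_{m,λ}(x) · (1)_{n+1−m,λ} + nλ · Bel_{n,λ}(x). -/

import Mathlib

open Finset

/-- Degenerate falling factorial `(x)_{n,λ}`. -/
noncomputable def degFall (lam x : ℝ) (n : ℕ) : ℝ := ∏ i ∈ Finset.range n, (x - i * lam)

/-- Ordinary falling factorial `(x)_k`. -/
noncomputable def fall (x : ℝ) (k : ℕ) : ℝ := ∏ i ∈ Finset.range k, (x - i)

/-!
Read a polynomial `p = ∑ pₖ Xᵏ` in the falling-factorial basis, `p ↦ ∑ pₖ (x)ₖ`. This map is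
injective and sends `Bel_{n,λ}` to `(x)_{n,λ}`; it turns `p ↦ X (p + p')` into multiplication
by `x`, and `p ↦ X p` into `x` times the shift `x ↦ x - 1`. Hence
`(x)_{n+1,λ} = (x)_{n,λ} (x - nλ)` gives `Bel_{n+1,λ} = x (Bel_{n,λ} + Bel_{n,λ}') - nλ Bel_{n,λ}`,
while `(x)_{n+1,λ} = x (x - λ)_{n,λ}` and the binomial theorem at `x - λ = (x - 1) + (1 - λ)` give
`Bel_{n+1,λ} = x ∑_{m ≤ n} C(n,m) Bel_{m,λ} (1)_{n+1-m,λ}`. Comparing the two is the theorem.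
-/

open Polynomial

lemma fall_succ (x : ℝ) (k : ℕ) : fall x (k + 1) = fall x k * (x - k) :=
  prod_range_succ _ _

lemma fall_succ' (x : ℝ) (k : ℕ) : fall x (k + 1) = x * fall (x - 1) k := by
  simp only [fall, prod_range_succ', Nat.cast_succ, Nat.cast_zero, sub_zero]
  rw [mul_comm]
  congr 1
  exact prod_congr rfl fun i _ => by ring

lemma fall_natCast_of_lt {j k : ℕ} (h : j < k) : fall j k = 0 :=
  prod_eq_zero (mem_range.2 h) (sub_self _)

lemma fall_natCast_self_ne_zero (j : ℕ) : fall j j ≠ 0 :=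
  prod_ne_zero_iff.2 fun i hi => sub_ne_zero.2 (by exact_mod_cast (mem_range.1 hi).ne')

lemma degFall_succ (lam x : ℝ) (n : ℕ) : degFall lam x (n + 1) = degFall lam x n * (x - n * lam) :=
  prod_range_succ _ _

lemma degFall_succ' (lam x : ℝ) (n : ℕ) : degFall lam x (n + 1) = x * degFall lam (x - lam) n := by
  simp only [degFall, prod_range_succ', Nat.cast_succ, Nat.cast_zero, zero_mul, sub_zero]
  rw [mul_comm]
  congr 1
  exact prod_congr rfl fun i _ => by ring

@[simp]
lemma degFall_one (lam x : ℝ) : degFall lam x 1 = x := by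
  simp [degFall]

lemma degFall_add (lam x y : ℝ) (n : ℕ) :
    degFall lam (x + y) n =
      ∑ m ∈ range (n + 1), n.choose m * degFall lam x m * degFall lam y (n - m) := by
  induction n with
  | zero => simp [degFall]
  | succ n ih =>
    have split : ∀ m ∈ range (n + 1), n.choose m * degFall lam x m * degFall lam y (n - m) *
        (x + y - n * lam) =
          n.choose m * (degFall lam x m * degFall lam y (n + 1 - m)) +
            n.choose m * (degFall lam x (m + 1) * degFall lam y (n - m)) := by
      intro m hm
      have hmn : m ≤ n := Nat.lt_succ_iff.1 (mem_range.1 hm)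
      rw [Nat.succ_sub hmn, degFall_succ, degFall_succ, Nat.cast_sub hmn]
      ring
    rw [degFall_succ, ih, sum_mul, sum_congr rfl split, sum_add_distrib,
      ← sum_choose_succ_mul fun i j => degFall lam x i * degFall lam y j]
    simp only [mul_assoc]

noncomputable def fallEval (x : ℝ) : ℝ[X] →ₗ[ℝ] ℝ :=
  lsum fun k => fall x k • LinearMap.id

lemma fallEval_apply (x : ℝ) (p : ℝ[X]) : fallEval x p = p.sum fun k a => a * fall x k := by
  simp only [fallEval, lsum_apply, LinearMap.smul_apply, LinearMap.id_apply, smul_eq_mul, mul_comm]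

lemma fallEval_monomial (x : ℝ) (k : ℕ) (a : ℝ) : fallEval x (monomial k a) = a * fall x k := by
  rw [fallEval_apply, sum_monomial_index a _ (zero_mul _)]

lemma fallEval_C_mul_X_pow (x : ℝ) (k : ℕ) (a : ℝ) : fallEval x (C a * X ^ k) = a * fall x k := by
  rw [C_mul_X_pow_eq_monomial, fallEval_monomial]

lemma fallEval_X_mul (x : ℝ) (p : ℝ[X]) : fallEval x (X * p) = x * fallEval (x - 1) p := by
  induction p using Polynomial.induction_on' with
  | add p q hp hq => rw [mul_add, map_add, map_add, hp, hq, mul_add]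
  | monomial k a =>
    rw [X_mul_monomial, fallEval_monomial, fallEval_monomial, fall_succ']
    ring

lemma fallEval_X_mul_add_derivative (x : ℝ) (p : ℝ[X]) :
    fallEval x (X * (p + derivative p)) = x * fallEval x p := by
  induction p using Polynomial.induction_on' with
  | add p q hp hq =>
    rw [derivative_add, add_add_add_comm, mul_add, map_add, hp, hq, map_add, mul_add]
  | monomial k a =>
    cases k with
    | zero =>
      rw [derivative_monomial, Nat.cast_zero, mul_zero, map_zero, add_zero, X_mul_monomial,
        fallEval_monomial, fallEval_monomial, fall_succ]
      simp [fall, mul_comm]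
    | succ k =>
      rw [derivative_monomial, mul_add, X_mul_monomial, X_mul_monomial, Nat.add_sub_cancel,
        map_add, fallEval_monomial, fallEval_monomial, fallEval_monomial, fall_succ x (k + 1)]
      push_cast
      ring

/-- `(j)ₖ` vanishes for `k > j` but not for `k = j`, so evaluating at `j = 0, 1, 2, …`
recovers the coefficients one at a time. -/
lemma eq_zero_of_forall_fallEval_eq_zero {p : ℝ[X]} (h : ∀ x, fallEval x p = 0) : p = 0 := by
  ext j
  induction j using Nat.strong_induction_on with
  | _ j ih =>
    have hj := h j
    rw [fallEval_apply, Polynomial.sum_def, sum_eq_single j] at hj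
    · exact (mul_eq_zero.1 hj).resolve_right (fall_natCast_self_ne_zero j)
    · intro k _ hkj
      rcases hkj.lt_or_gt with hlt | hgt
      · rw [ih k hlt, coeff_zero, zero_mul]
      · rw [fall_natCast_of_lt hgt, mul_zero]
    · intro hj
      rw [notMem_support_iff.1 hj, zero_mul]

lemma eq_of_forall_fallEval_eq {p q : ℝ[X]} (h : ∀ x, fallEval x p = fallEval x q) : p = q :=
  sub_eq_zero.1 <| eq_zero_of_forall_fallEval_eq_zero fun x => by rw [map_sub, h, sub_self]

noncomputable def belPoly (S2 : ℕ → ℕ → ℝ) (n : ℕ) : ℝ[X] :=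
  ∑ k ∈ range (n + 1), C (S2 n k) * X ^ k

lemma eval_belPoly (S2 : ℕ → ℕ → ℝ) (n : ℕ) (x : ℝ) :
    (belPoly S2 n).eval x = ∑ k ∈ range (n + 1), S2 n k * x ^ k := by
  simp [belPoly, eval_finsetSum]

lemma fallEval_belPoly (S2 : ℕ → ℕ → ℝ) (n : ℕ) (x : ℝ) :
    fallEval x (belPoly S2 n) = ∑ k ∈ range (n + 1), S2 n k * fall x k := by
  simp only [belPoly, map_sum, fallEval_C_mul_X_pow]

section DegenerateBell

variable {lam : ℝ} {S2 : ℕ → ℕ → ℝ}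
  (hS2 : ∀ (n : ℕ) (x : ℝ), degFall lam x n = ∑ k ∈ range (n + 1), S2 n k * fall x k)
include hS2

lemma fallEval_belPoly_eq_degFall (n : ℕ) (x : ℝ) :
    fallEval x (belPoly S2 n) = degFall lam x n := by
  rw [fallEval_belPoly, hS2]

lemma belPoly_succ_eq_X_mul_add_derivative (n : ℕ) :
    belPoly S2 (n + 1) =
      X * (belPoly S2 n + derivative (belPoly S2 n)) - C (n * lam) * belPoly S2 n := by
  refine eq_of_forall_fallEval_eq fun x => ?_
  rw [map_sub, fallEval_X_mul_add_derivative, C_mul', map_smul, smul_eq_mul,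
    fallEval_belPoly_eq_degFall hS2, fallEval_belPoly_eq_degFall hS2, degFall_succ]
  ring

lemma belPoly_succ_eq_X_mul_sum (n : ℕ) :
    belPoly S2 (n + 1) =
      X * ∑ m ∈ range (n + 1),
        C (n.choose m : ℝ) * belPoly S2 m * C (degFall lam 1 (n + 1 - m)) := by
  refine eq_of_forall_fallEval_eq fun x => ?_
  rw [fallEval_X_mul, fallEval_belPoly_eq_degFall hS2, degFall_succ',
    show x - lam = x - 1 + (1 - lam) by ring, degFall_add, map_sum]
  congr 1
  refine sum_congr rfl fun m hm => ?_
  rw [mul_right_comm (C _), ← C_mul, C_mul', map_smul, smul_eq_mul,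
    fallEval_belPoly_eq_degFall hS2, Nat.sub_add_comm (Nat.lt_succ_iff.1 (mem_range.1 hm)),
    degFall_succ']
  ring

end DegenerateBell

theorem x_deriv_degenerate_bell_general (lam : ℝ) (S2 : ℕ → ℕ → ℝ)
    (hS2 : ∀ (n : ℕ) (x : ℝ), degFall lam x n = ∑ k ∈ range (n + 1), S2 n k * fall x k)
    (n : ℕ) (x : ℝ) :
    x * deriv (fun y => ∑ k ∈ range (n + 1), S2 n k * y ^ k) x =
      x * ∑ m ∈ range n, (n.choose m : ℝ) * (∑ k ∈ range (m + 1), S2 m k * x ^ k) *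
          degFall lam 1 (n + 1 - m) +
        n * lam * ∑ k ∈ range (n + 1), S2 n k * x ^ k := by
  have recurrence := congrArg (eval x) (belPoly_succ_eq_X_mul_add_derivative hS2 n)
  have binomial := congrArg (eval x) (belPoly_succ_eq_X_mul_sum hS2 n)
  rw [sum_range_succ, Nat.add_sub_cancel_left, degFall_one, Nat.choose_self] at binomial
  simp only [eval_sub, eval_mul, eval_add, eval_X, eval_C, eval_finsetSum, Nat.cast_one, one_mul,
    mul_one] at recurrence binomial
  simp only [← eval_belPoly, Polynomial.deriv]
  linear_combination binomial - recurrence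

/-- with `Bel_{n,λ}(x) = ∑_{k=0}^n S_{2,λ}(n,k) x^k`, for `n ≥ 1`,
`x Bel'_{n,λ}(x) = x ∑_{m=0}^{n-1} C(n,m) Bel_{m,λ}(x) (1)_{n+1−m,λ} + nλ Bel_{n,λ}(x)`. -/
theorem x_deriv_degenerate_bell (lam : ℝ) (S2 : ℕ → ℕ → ℝ)
    (hS2 : ∀ (n : ℕ) (x : ℝ), degFall lam x n = ∑ k ∈ range (n + 1), S2 n k * fall x k)
    (n : ℕ) (hn : 1 ≤ n) (x : ℝ) :
    x * deriv (fun y => ∑ k ∈ range (n + 1), S2 n k * y ^ k) x =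
      x * ∑ m ∈ range n, (n.choose m : ℝ) * (∑ k ∈ range (m + 1), S2 m k * x ^ k) *
          degFall lam 1 (n + 1 - m) +
        n * lam * ∑ k ∈ range (n + 1), S2 n k * x ^ k :=
  x_deriv_degenerate_bell_general lam S2 hS2 n x
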